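/- arXiv:2104.12834 — 2 statements merged into one kernel-verified Lean document; each statement's English description precedes it below -/
import Mathlib

section
/- Let A, B, s, α, β be positive real parameters with α ≤ 1, and for z, t > 0 define f_z(t) = t − A z^s t^{1−α} − B z t^{1+β}. Set z_* = (α/B)^{α/(α+sβ)} (β/A)^{β/(α+sβ)} (α+β)^{−(α+β)/(α+sβ)} and t_* = (α/B)^{s/(α+sβ)} (A/β)^{1/(α+sβ)} (α+β)^{(1−s)/(α+sβ)}. Then for every z with 0 < z < z_* one has f_z(t_*) > 0. -/
open MeasureTheory Filter
open scoped RealInnerProductSpace ENNReal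

noncomputable section

/-- Euclidean space `ℝ^N`. -/
abbrev RN (N : ℕ) := EuclideanSpace ℝ (Fin N)

/-- The gradient of a function `u : ℝ^N → ℝ`. -/
def grad {N : ℕ} (u : RN N → ℝ) (x : RN N) : RN N := gradient u x

/-- Membership in the Sobolev space `H¹(ℝ^N)`: `u ∈ L²` and `∇u ∈ L²`. -/
def InH1 {N : ℕ} (u : RN N → ℝ) : Prop :=
  MemLp u 2 (volume : Measure (RN N)) ∧ MemLp (grad u) 2 (volume : Measure (RN N))

/-- The `H¹` norm. -/
def H1norm {N : ℕ} (u : RN N → ℝ) : ℝ :=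
  Real.sqrt ((∫ x, (u x) ^ 2) + ∫ x, ‖grad u x‖ ^ 2)

/-- The `H¹` distance. -/
def H1dist {N : ℕ} (u v : RN N → ℝ) : ℝ :=
  Real.sqrt ((∫ x, (u x - v x) ^ 2) + ∫ x, ‖grad u x - grad v x‖ ^ 2)

/-- The `L²`-norm of the gradient, `‖∇u‖₂`. -/
def gradL2 {N : ℕ} (u : RN N → ℝ) : ℝ := (∫ x, ‖grad u x‖ ^ 2) ^ ((1:ℝ)/2)

/-- The `L²`-norm `‖u‖₂`. -/
def L2 {N : ℕ} (u : RN N → ℝ) : ℝ := (∫ x, (u x) ^ 2) ^ ((1:ℝ)/2)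

/-- The `L^q`-norm `‖u‖_q` (for finite `q`). -/
def Lq {N : ℕ} (q : ℝ) (u : RN N → ℝ) : ℝ := (∫ x, |u x| ^ q) ^ (1/q)

/-- The energy functional
`F(u) = ½∫(|∇u|² − V u²) − (1/p)∫|u|^p`. -/
def Fen {N : ℕ} (V : RN N → ℝ) (p : ℝ) (u : RN N → ℝ) : ℝ :=
  (1/2) * (∫ x, (‖grad u x‖ ^ 2 - V x * (u x) ^ 2)) - (1/p) * ∫ x, |u x| ^ p

/-- The limit energy functional `F_∞(u) = ½∫|∇u|² − (1/p)∫|u|^p`. -/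
def FInf {N : ℕ} (p : ℝ) (u : RN N → ℝ) : ℝ :=
  (1/2) * (∫ x, ‖grad u x‖ ^ 2) - (1/p) * ∫ x, |u x| ^ p

/-- `u` is a weak solution of `−Δu − V u + λ u = |u|^{p−2} u` on `ℝ^N`. -/
def WeakSol {N : ℕ} (V : RN N → ℝ) (lam p : ℝ) (u : RN N → ℝ) : Prop :=
  ∀ φ : RN N → ℝ, ContDiff ℝ (⊤ : ℕ∞) φ → HasCompactSupport φ →
    (∫ x, ⟪grad u x, grad φ x⟫) + (∫ x, (lam - V x) * u x * φ x)
      = ∫ x, |u x| ^ (p - 2) * u x * φ x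

/-- The derivative of `F` at `u` in direction `φ`. -/
def dFen {N : ℕ} (V : RN N → ℝ) (p : ℝ) (u φ : RN N → ℝ) : ℝ :=
  (∫ x, ⟪grad u x, grad φ x⟫) - (∫ x, V x * u x * φ x)
    - ∫ x, |u x| ^ (p - 2) * u x * φ x

/-- The action functional `I_λ`. -/
def Ilam {N : ℕ} (V : RN N → ℝ) (lam p : ℝ) (u : RN N → ℝ) : ℝ :=
  (1/2) * (∫ x, ‖grad u x‖ ^ 2) + (lam/2) * (∫ x, (u x) ^ 2)
    - (1/2) * (∫ x, V x * (u x) ^ 2) - (1/p) * ∫ x, |u x| ^ p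

/-- The limit action functional `I_{∞,λ}`. -/
def IlamInf {N : ℕ} (lam p : ℝ) (u : RN N → ℝ) : ℝ :=
  (1/2) * (∫ x, ‖grad u x‖ ^ 2) + (lam/2) * (∫ x, (u x) ^ 2) - (1/p) * ∫ x, |u x| ^ p

/-- The derivative of `I_λ` at `u` in direction `φ`. -/
def dIlam {N : ℕ} (V : RN N → ℝ) (lam p : ℝ) (u φ : RN N → ℝ) : ℝ :=
  (∫ x, ⟪grad u x, grad φ x⟫) + lam * (∫ x, u x * φ x)
    - (∫ x, V x * u x * φ x) - ∫ x, |u x| ^ (p - 2) * u x * φ x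

/-- The best Sobolev constant
`S = inf {‖∇u‖₂² / ‖u‖_{2*}² : u ∈ D^{1,2}(ℝ^N) \ {0}}`, `2* = 2N/(N−2)`. -/
def sobolevS (N : ℕ) : ℝ :=
  sInf {c : ℝ | ∃ u : RN N → ℝ,
    MemLp u (ENNReal.ofReal (2 * N / ((N : ℝ) - 2))) volume ∧
    MemLp (grad u) 2 volume ∧ ¬ (u =ᵐ[volume] 0) ∧
    c = (∫ x, ‖grad u x‖ ^ 2) /
      ((∫ x, |u x| ^ ((2 * N : ℝ) / ((N : ℝ) - 2))) ^ (((N : ℝ) - 2) / N))}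

/-- The optimal Gagliardo–Nirenberg constant `G_q` for the inequality
`‖u‖_q ≤ G_q ‖u‖₂^{1 − N(q−2)/(2q)} ‖∇u‖₂^{N(q−2)/(2q)}` on `H¹(ℝ^N)`. -/
def GN (N : ℕ) (q : ℝ) : ℝ :=
  sInf {C : ℝ | 0 ≤ C ∧ ∀ u : RN N → ℝ, InH1 u →
    Lq q u ≤ C * (L2 u) ^ (1 - N * (q - 2) / (2 * q))
      * (gradL2 u) ^ (N * (q - 2) / (2 * q))}

/-- The scaling parameter `μ_ρ = (ρ/ρ₀)^{2(p−2)/(N(p−2)−4)}`. -/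
def mupar (N : ℕ) (p ρ₀ ρ : ℝ) : ℝ := (ρ / ρ₀) ^ (2 * (p - 2) / ((N : ℝ) * (p - 2) - 4))

/-- The rescaled ground state `Z_ρ(x) = μ_ρ^{−2/(p−2)} U(x/μ_ρ)`. -/
def Zfun {N : ℕ} (p ρ₀ : ℝ) (U : RN N → ℝ) (ρ : ℝ) (x : RN N) : ℝ :=
  (mupar N p ρ₀ ρ) ^ (-(2 / (p - 2))) * U ((mupar N p ρ₀ ρ)⁻¹ • x)

/-- The ground state level `m_ρ = F_∞(Z_ρ)`. -/
def mlevel {N : ℕ} (p ρ₀ : ℝ) (U : RN N → ℝ) (ρ : ℝ) : ℝ := FInf p (Zfun p ρ₀ U ρ)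

/-- `λ_ρ = (ρ₀/ρ)^{4(p−2)/(N(p−2)−4)}`. -/
def lamr (N : ℕ) (p ρ₀ ρ : ℝ) : ℝ := (ρ₀ / ρ) ^ (4 * (p - 2) / ((N : ℝ) * (p - 2) - 4))

/-- The mass-preserving rescaling `u_h(x) = h^{N/2} u(hx)`. -/
def scaleFun {N : ℕ} (h : ℝ) (u : RN N → ℝ) (x : RN N) : ℝ := h ^ ((N : ℝ) / 2) * u (h • x)

/-- A continuous path in `S_ρ ⊂ H¹(ℝ^N)` defined on `[0,1]`
(continuity with respect to the `H¹` distance). -/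
def IsH1Path {N : ℕ} (ρ : ℝ) (ξ : ℝ → RN N → ℝ) : Prop :=
  (∀ t ∈ Set.Icc (0:ℝ) 1, InH1 (ξ t) ∧ (∫ x, (ξ t x) ^ 2) = ρ ^ 2) ∧
  ∀ t₀ ∈ Set.Icc (0:ℝ) 1, ∀ ε > 0, ∃ δ > 0, ∀ t ∈ Set.Icc (0:ℝ) 1,
    |t - t₀| < δ → H1dist (ξ t) (ξ t₀) < ε

/-- The mountain pass level `m_{V,ρ}` of `F` on `S_ρ` over paths joining `u₀` to `u₁`. -/
def MPlevel {N : ℕ} (V : RN N → ℝ) (p ρ : ℝ) (u₀ u₁ : RN N → ℝ) : ℝ :=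
  sInf {c : ℝ | ∃ ξ : ℝ → RN N → ℝ, IsH1Path ρ ξ ∧ ξ 0 = u₀ ∧ ξ 1 = u₁ ∧
    c = sSup ((fun t => Fen V p (ξ t)) '' Set.Icc (0:ℝ) 1)}

/-! The point `t_*` is where the two subtracted terms of `f_{z_*}` take the shares `β/(α+β)` and
`α/(α+β)` of `t_*`, so `f_{z_*}(t_*) = 0`; both terms are strictly increasing in `z`, hence
`f_z(t_*) > 0` for `z < z_*`. The two share identities are linear relations between logarithms. -/

def fz (A B s α β z t : ℝ) : ℝ := t - A * z ^ s * t ^ (1 - α) - B * z * t ^ (1 + β)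

def zStar (A B s α β : ℝ) : ℝ :=
  (α / B) ^ (α / (α + s * β)) * (β / A) ^ (β / (α + s * β))
    * (α + β) ^ (-((α + β) / (α + s * β)))

def tStar (A B s α β : ℝ) : ℝ :=
  (α / B) ^ (s / (α + s * β)) * (A / β) ^ (1 / (α + s * β))
    * (α + β) ^ ((1 - s) / (α + s * β))

open Real

section Parameters

variable {A B s α β : ℝ}

theorem fz_lt_fz_of_lt (hA : 0 < A) (hB : 0 < B) (hs : 0 < s) {z w t : ℝ} (hz : 0 < z)
    (hzw : z < w) (ht : 0 < t) : fz A B s α β w t < fz A B s α β z t := by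
  have hpow : A * z ^ s * t ^ (1 - α) < A * w ^ s * t ^ (1 - α) := by
    gcongr
  have hlin : B * z * t ^ (1 + β) < B * w * t ^ (1 + β) := by
    gcongr
  unfold fz
  linarith

theorem tStar_pos (hA : 0 < A) (hB : 0 < B) (hα : 0 < α) (hβ : 0 < β) :
    0 < tStar A B s α β := by
  unfold tStar; positivity

theorem zStar_pos (hA : 0 < A) (hB : 0 < B) (hα : 0 < α) (hβ : 0 < β) :
    0 < zStar A B s α β := by
  unfold zStar; positivity

theorem log_tStar (hA : 0 < A) (hB : 0 < B) (hα : 0 < α) (hβ : 0 < β) :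
    log (tStar A B s α β) = (s / (α + s * β)) * (log α - log B)
      + (1 / (α + s * β)) * (log A - log β) + ((1 - s) / (α + s * β)) * log (α + β) := by
  unfold tStar
  rw [log_mul (by positivity) (by positivity), log_mul (by positivity) (by positivity),
    log_rpow (by positivity), log_rpow (by positivity), log_rpow (by positivity),
    log_div hα.ne' hB.ne', log_div hA.ne' hβ.ne']

theorem log_zStar (hA : 0 < A) (hB : 0 < B) (hα : 0 < α) (hβ : 0 < β) :
    log (zStar A B s α β) = (α / (α + s * β)) * (log α - log B)
      + (β / (α + s * β)) * (log β - log A) - ((α + β) / (α + s * β)) * log (α + β) := by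
  unfold zStar
  rw [log_mul (by positivity) (by positivity), log_mul (by positivity) (by positivity),
    log_rpow (by positivity), log_rpow (by positivity), log_rpow (by positivity),
    log_div hα.ne' hB.ne', log_div hβ.ne' hA.ne']
  ring

theorem A_mul_zStar_rpow_mul_tStar_rpow (hA : 0 < A) (hB : 0 < B) (hs : 0 < s) (hα : 0 < α)
    (hβ : 0 < β) :
    A * zStar A B s α β ^ s * tStar A B s α β ^ (1 - α)
      = β / (α + β) * tStar A B s α β := by
  have hz := zStar_pos (s := s) hA hB hα hβ
  have ht := tStar_pos (s := s) hA hB hα hβ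
  have hE : α + s * β ≠ 0 := by positivity
  refine log_injOn_pos (by simp only [Set.mem_Ioi]; positivity)
    (by simp only [Set.mem_Ioi]; positivity) ?_
  rw [log_mul (by positivity) (by positivity), log_mul hA.ne' (by positivity),
    log_mul (by positivity) ht.ne', log_rpow hz, log_rpow ht,
    log_div hβ.ne' (by positivity), log_zStar hA hB hα hβ, log_tStar hA hB hα hβ]
  field_simp
  ring

theorem B_mul_zStar_mul_tStar_rpow (hA : 0 < A) (hB : 0 < B) (hs : 0 < s) (hα : 0 < α)
    (hβ : 0 < β) :
    B * zStar A B s α β * tStar A B s α β ^ (1 + β)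
      = α / (α + β) * tStar A B s α β := by
  have hz := zStar_pos (s := s) hA hB hα hβ
  have ht := tStar_pos (s := s) hA hB hα hβ
  have hE : α + s * β ≠ 0 := by positivity
  refine log_injOn_pos (by simp only [Set.mem_Ioi]; positivity)
    (by simp only [Set.mem_Ioi]; positivity) ?_
  rw [log_mul (by positivity) (by positivity), log_mul hB.ne' hz.ne',
    log_mul (by positivity) ht.ne', log_rpow ht,
    log_div hα.ne' (by positivity), log_zStar hA hB hα hβ, log_tStar hA hB hα hβ]
  field_simp
  ring

theorem fz_zStar_tStar (hA : 0 < A) (hB : 0 < B) (hs : 0 < s) (hα : 0 < α) (hβ : 0 < β) :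
    fz A B s α β (zStar A B s α β) (tStar A B s α β) = 0 := by
  have hαβ : α + β ≠ 0 := by positivity
  unfold fz
  rw [A_mul_zStar_rpow_mul_tStar_rpow hA hB hs hα hβ, B_mul_zStar_mul_tStar_rpow hA hB hs hα hβ]
  field_simp
  ring

end Parameters

theorem statement17_general
    (A B s α β : ℝ) (hA : 0 < A) (hB : 0 < B) (hs : 0 < s) (hα : 0 < α) (hβ : 0 < β) :
    ∀ z : ℝ, 0 < z →
      z < (α / B) ^ (α / (α + s * β)) * (β / A) ^ (β / (α + s * β))
          * (α + β) ^ (-((α + β) / (α + s * β))) →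
      0 < (α / B) ^ (s / (α + s * β)) * (A / β) ^ (1 / (α + s * β))
            * (α + β) ^ ((1 - s) / (α + s * β))
          - A * z ^ s * ((α / B) ^ (s / (α + s * β)) * (A / β) ^ (1 / (α + s * β))
            * (α + β) ^ ((1 - s) / (α + s * β))) ^ (1 - α)
          - B * z * ((α / B) ^ (s / (α + s * β)) * (A / β) ^ (1 / (α + s * β))
            * (α + β) ^ ((1 - s) / (α + s * β))) ^ (1 + β) := by
  intro z hz hz_lt
  show 0 < fz A B s α β z (tStar A B s α β)
  calc 0 = fz A B s α β (zStar A B s α β) (tStar A B s α β) :=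
        (fz_zStar_tStar hA hB hs hα hβ).symm
    _ < fz A B s α β z (tStar A B s α β) :=
        fz_lt_fz_of_lt hA hB hs hz hz_lt (tStar_pos hA hB hα hβ)

/-- Lemma 4.2, elementary lemma. For positive `A, B, s, α, β` with `α ≤ 1`,
setting `f_z(t) = t − A z^s t^{1−α} − B z t^{1+β}`,
`z_* = (α/B)^{α/(α+sβ)} (β/A)^{β/(α+sβ)} (α+β)^{−(α+β)/(α+sβ)}` and
`t_* = (α/B)^{s/(α+sβ)} (A/β)^{1/(α+sβ)} (α+β)^{(1−s)/(α+sβ)}`, one has `f_z(t_*) > 0`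
whenever `0 < z < z_*`. -/
theorem statement17
    (A B s α β : ℝ) (hA : 0 < A) (hB : 0 < B) (hs : 0 < s) (hα : 0 < α) (hβ : 0 < β)
    (hα1 : α ≤ 1) :
    ∀ z : ℝ, 0 < z →
      z < (α / B) ^ (α / (α + s * β)) * (β / A) ^ (β / (α + s * β))
          * (α + β) ^ (-((α + β) / (α + s * β))) →
      0 < (α / B) ^ (s / (α + s * β)) * (A / β) ^ (1 / (α + s * β))
            * (α + β) ^ ((1 - s) / (α + s * β))
          - A * z ^ s * ((α / B) ^ (s / (α + s * β)) * (A / β) ^ (1 / (α + s * β))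
            * (α + β) ^ ((1 - s) / (α + s * β))) ^ (1 - α)
          - B * z * ((α / B) ^ (s / (α + s * β)) * (A / β) ^ (1 / (α + s * β))
            * (α + β) ^ ((1 - s) / (α + s * β))) ^ (1 + β) :=
  statement17_general A B s α β hA hB hs hα hβ
end
end

section
/- Let N ≥ 1, p ∈ (2 + 4/N, 2*), V ≥ 0 measurable, and let R_* > 0 and ρ_* > 0 be such that for every α ∈ (0, ρ_*), inf{F(u) : u ∈ S_α, ‖∇u‖₂ = R_*} > 0. For α ∈ (0, ρ_*) define c_{V,α} := inf{F(u) : u ∈ S_α, ‖∇u‖₂ ≤ R_*}. If ρ ∈ (0, ρ_*) and c_{V,ρ} < 0, then for every α with 0 < α ≤ ρ one has c_{V,α} ≥ c_{V,ρ}. -/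
open MeasureTheory Filter
open scoped RealInnerProductSpace ENNReal

noncomputable section

/-! Scaling `u ↦ t u` with `t ≥ 1` multiplies the quadratic part of `F` by `t²` and the `L^p`
part by `t^p ≥ t²`, so `F(t u) ≤ t² F(u) ≤ F(u)` whenever `F(u) ≤ 0`. Take `u ∈ S_α` with
`‖∇u‖₂ ≤ R_*`; if `F(u) ≥ 0` then `c_{V,ρ} < 0 ≤ F(u)`. Otherwise push `u` to mass `ρ` with
`t = ρ/α`. Either the gradient bound survives, so `c_{V,ρ} ≤ F(t u) ≤ F(u)`, or it breaks
first at `t = R_*/‖∇u‖₂`, where `t u` lies on the sphere `‖∇·‖₂ = R_*` in `S_{tα}`, `tα < ρ_*`,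
with negative energy: impossible. -/

namespace Real

theorem bddBelow_of_sInf_ne_zero {s : Set ℝ} (h : sInf s ≠ 0) : BddBelow s := by
  by_contra hs
  exact h (Real.sInf_of_not_bddBelow hs)

theorem nonempty_of_sInf_ne_zero {s : Set ℝ} (h : sInf s ≠ 0) : s.Nonempty := by
  rw [Set.nonempty_iff_ne_empty]
  rintro rfl
  exact h Real.sInf_empty

theorem pos_of_mem_of_sInf_pos {s : Set ℝ} (h : 0 < sInf s) {c : ℝ} (hc : c ∈ s) : 0 < c :=
  h.trans_le (csInf_le (bddBelow_of_sInf_ne_zero h.ne') hc)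

end Real

section Scaling

variable {N : ℕ}

theorem grad_const_mul (c : ℝ) (u : RN N → ℝ) (x : RN N) :
    grad (fun y => c * u y) x = c • grad u x := by
  change gradient (c • u) x = c • gradient u x
  rw [gradient, fderiv_const_smul_field, Pi.smul_apply, map_smul, gradient]

theorem InH1.const_mul {u : RN N → ℝ} (hu : InH1 u) (c : ℝ) : InH1 (fun y => c * u y) := by
  refine ⟨hu.1.const_mul c, ?_⟩
  rw [show grad (fun y => c * u y) = fun x => c • grad u x from funext (grad_const_mul c u)]
  exact hu.2.const_smul c

theorem integral_sq_const_mul (c : ℝ) (u : RN N → ℝ) :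
    ∫ x, (c * u x) ^ 2 = c ^ 2 * ∫ x, (u x) ^ 2 := by
  simp_rw [mul_pow]
  exact integral_const_mul _ _

theorem norm_grad_const_mul_sq (c : ℝ) (u : RN N → ℝ) (x : RN N) :
    ‖grad (fun y => c * u y) x‖ ^ 2 = c ^ 2 * ‖grad u x‖ ^ 2 := by
  rw [grad_const_mul, norm_smul, Real.norm_eq_abs, mul_pow, sq_abs]

theorem gradL2_nonneg (u : RN N → ℝ) : 0 ≤ gradL2 u :=
  Real.rpow_nonneg (integral_nonneg fun _ => sq_nonneg _) _

theorem gradL2_const_mul {c : ℝ} (hc : 0 ≤ c) (u : RN N → ℝ) :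
    gradL2 (fun y => c * u y) = c * gradL2 u := by
  simp_rw [gradL2, norm_grad_const_mul_sq, integral_const_mul]
  rw [Real.mul_rpow (sq_nonneg c) (integral_nonneg fun x => sq_nonneg _), ← Real.sqrt_eq_rpow,
    Real.sqrt_sq hc]

theorem integral_abs_rpow_const_mul {c : ℝ} (hc : 0 ≤ c) (p : ℝ) (u : RN N → ℝ) :
    ∫ x, |c * u x| ^ p = c ^ p * ∫ x, |u x| ^ p := by
  simp_rw [abs_mul, abs_of_nonneg hc, Real.mul_rpow hc (abs_nonneg _)]
  exact integral_const_mul _ _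

theorem Fen_const_mul (V : RN N → ℝ) (p : ℝ) {c : ℝ} (hc : 0 ≤ c) (u : RN N → ℝ) :
    Fen V p (fun y => c * u y) =
      c ^ 2 * ((1/2) * ∫ x, (‖grad u x‖ ^ 2 - V x * (u x) ^ 2))
        - c ^ p * ((1/p) * ∫ x, |u x| ^ p) := by
  have hquad : ∀ x, ‖grad (fun y => c * u y) x‖ ^ 2 - V x * (c * u x) ^ 2
      = c ^ 2 * (‖grad u x‖ ^ 2 - V x * (u x) ^ 2) := fun x => by
    rw [norm_grad_const_mul_sq]; ring
  rw [Fen, integral_abs_rpow_const_mul hc, funext hquad, integral_const_mul]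
  ring

theorem Fen_const_mul_le (V : RN N → ℝ) {p : ℝ} (hp : 2 ≤ p) (u : RN N → ℝ) {c : ℝ}
    (hc : 1 ≤ c) : Fen V p (fun y => c * u y) ≤ c ^ 2 * Fen V p u := by
  have hcp : c ^ 2 ≤ c ^ p := by
    exact_mod_cast Real.rpow_le_rpow_of_exponent_le hc hp
  have hLp : 0 ≤ (1/p) * ∫ x, |u x| ^ p :=
    mul_nonneg (by positivity) (integral_nonneg fun x => by positivity)
  rw [Fen_const_mul V p (zero_le_one.trans hc), Fen]
  nlinarith

theorem Fen_const_mul_le_self (V : RN N → ℝ) {p : ℝ} (hp : 2 ≤ p) {u : RN N → ℝ}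
    (hu : Fen V p u ≤ 0) {c : ℝ} (hc : 1 ≤ c) :
    Fen V p (fun y => c * u y) ≤ Fen V p u :=
  (Fen_const_mul_le V hp u hc).trans (by nlinarith [one_le_pow₀ (n := 2) hc])

end Scaling

section LevelSets

variable {N : ℕ} (V : RN N → ℝ) (p R : ℝ)

/-- `c_{V,α} = sInf (ballEnergies V p R_* α)`. -/
def ballEnergies (α : ℝ) : Set ℝ :=
  {c | ∃ u : RN N → ℝ, InH1 u ∧ (∫ x, (u x) ^ 2) = α ^ 2 ∧ gradL2 u ≤ R ∧
    c = Fen V p u}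

def sphereEnergies (α : ℝ) : Set ℝ :=
  {c | ∃ u : RN N → ℝ, InH1 u ∧ (∫ x, (u x) ^ 2) = α ^ 2 ∧ gradL2 u = R ∧
    c = Fen V p u}

theorem sphereEnergies_subset_ballEnergies (α : ℝ) :
    sphereEnergies V p R α ⊆ ballEnergies V p R α := by
  rintro _ ⟨u, hu, hmass, hgrad, rfl⟩
  exact ⟨u, hu, hmass, hgrad.le, rfl⟩

variable {V p R}

theorem exists_ballEnergies_le_or_sphereEnergies_neg (hp : 2 ≤ p) {α ρ : ℝ} (hα : 0 < α)
    (hαρ : α ≤ ρ) {u : RN N → ℝ} (hu : InH1 u) (hmass : ∫ x, (u x) ^ 2 = α ^ 2)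
    (hgrad : gradL2 u ≤ R) (hF : Fen V p u < 0) :
    (∃ c ∈ ballEnergies V p R ρ, c ≤ Fen V p u) ∨
      ∃ β, α ≤ β ∧ β < ρ ∧ ∃ c ∈ sphereEnergies V p R β, c < 0 := by
  have hmass_mul : ∀ t, ∫ x, (t * u x) ^ 2 = (t * α) ^ 2 := fun t => by
    rw [integral_sq_const_mul, hmass, mul_pow]
  have hρα : 1 ≤ ρ / α := (one_le_div hα).mpr hαρ
  rcases le_or_gt (ρ / α * gradL2 u) R with hρgrad | hρgrad
  · refine .inl ⟨_, ⟨_, hu.const_mul (ρ / α), ?_, ?_, rfl⟩,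
      Fen_const_mul_le_self V hp hF.le hρα⟩
    · rw [hmass_mul, div_mul_cancel₀ ρ hα.ne']
    · rwa [gradL2_const_mul (zero_le_one.trans hρα)]
  · have hgrad_pos : 0 < gradL2 u := by
      by_contra! h
      nlinarith [gradL2_nonneg u]
    set t := R / gradL2 u
    have ht : 1 ≤ t := (one_le_div hgrad_pos).mpr hgrad
    have htρ : t * α < ρ := (lt_div_iff₀ hα).mp ((div_lt_iff₀ hgrad_pos).mpr hρgrad)
    refine .inr ⟨t * α, le_mul_of_one_le_left hα.le ht, htρ, _,
      ⟨_, hu.const_mul t, hmass_mul t, ?_, rfl⟩,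
      (Fen_const_mul_le_self V hp hF.le ht).trans_lt hF⟩
    rw [gradL2_const_mul (zero_le_one.trans ht), div_mul_cancel₀ R hgrad_pos.ne']

end LevelSets

theorem statement18_general
    (N : ℕ) (p : ℝ)
    (hp1 : 2 + 4 / (N : ℝ) < p)
    (V : RN N → ℝ)
    (Rstar ρstar : ℝ)
    (hgeom : ∀ α : ℝ, 0 < α → α < ρstar →
      0 < sInf {c : ℝ | ∃ u : RN N → ℝ, InH1 u ∧ (∫ x, (u x) ^ 2) = α ^ 2 ∧
        gradL2 u = Rstar ∧ c = Fen V p u})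
    (ρ : ℝ) (hρρstar : ρ < ρstar)
    (hcneg : sInf {c : ℝ | ∃ u : RN N → ℝ, InH1 u ∧ (∫ x, (u x) ^ 2) = ρ ^ 2 ∧
      gradL2 u ≤ Rstar ∧ c = Fen V p u} < 0) :
    ∀ α : ℝ, 0 < α → α ≤ ρ →
      sInf {c : ℝ | ∃ u : RN N → ℝ, InH1 u ∧ (∫ x, (u x) ^ 2) = ρ ^ 2 ∧
          gradL2 u ≤ Rstar ∧ c = Fen V p u}
        ≤ sInf {c : ℝ | ∃ u : RN N → ℝ, InH1 u ∧ (∫ x, (u x) ^ 2) = α ^ 2 ∧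
          gradL2 u ≤ Rstar ∧ c = Fen V p u} := by
  intro α hα hαρ
  change ∀ β, 0 < β → β < ρstar → 0 < sInf (sphereEnergies V p Rstar β) at hgeom
  change sInf (ballEnergies V p Rstar ρ) < 0 at hcneg
  change sInf (ballEnergies V p Rstar ρ) ≤ sInf (ballEnergies V p Rstar α)
  have hp : 2 ≤ p := by linarith [show 0 ≤ 4 / (N : ℝ) by positivity]
  have hne : (ballEnergies V p Rstar α).Nonempty :=
    (Real.nonempty_of_sInf_ne_zero (hgeom α hα (hαρ.trans_lt hρρstar)).ne').mono
      (sphereEnergies_subset_ballEnergies V p Rstar α)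
  refine le_csInf hne ?_
  rintro _ ⟨u, hu, hmass, hgrad, rfl⟩
  rcases le_or_gt 0 (Fen V p u) with hF | hF
  · exact hcneg.le.trans hF
  rcases exists_ballEnergies_le_or_sphereEnergies_neg hp hα hαρ hu hmass hgrad hF with
    ⟨c, hc, hcu⟩ | ⟨β, hαβ, hβρ, c, hc, hc_neg⟩
  · exact (csInf_le (Real.bddBelow_of_sInf_ne_zero hcneg.ne) hc).trans hcu
  · have hβ_pos := hgeom β (hα.trans_le hαβ) (hβρ.trans hρρstar)
    exact absurd (Real.pos_of_mem_of_sInf_pos hβ_pos hc) hc_neg.not_gt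

/-- Lemma 4.4. Suppose that for every `0 < α < ρ_*` the infimum of `F` over
`{u ∈ S_α : ‖∇u‖₂ = R_*}` is positive, and define
`c_{V,α} = inf {F(u) : u ∈ S_α, ‖∇u‖₂ ≤ R_*}`. If `0 < ρ < ρ_*` and `c_{V,ρ} < 0`, then
`c_{V,α} ≥ c_{V,ρ}` for every `0 < α ≤ ρ`. -/
theorem statement18
    (N : ℕ) (hN : 1 ≤ N) (p : ℝ)
    (hp1 : 2 + 4 / (N : ℝ) < p) (hp2 : 3 ≤ N → p < 2 * N / ((N : ℝ) - 2))
    (V : RN N → ℝ) (hVmeas : Measurable V) (hVpos : ∀ x, 0 ≤ V x)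
    (Rstar ρstar : ℝ) (hRstar : 0 < Rstar) (hρstar : 0 < ρstar)
    (hgeom : ∀ α : ℝ, 0 < α → α < ρstar →
      0 < sInf {c : ℝ | ∃ u : RN N → ℝ, InH1 u ∧ (∫ x, (u x) ^ 2) = α ^ 2 ∧
        gradL2 u = Rstar ∧ c = Fen V p u})
    (ρ : ℝ) (hρ : 0 < ρ) (hρρstar : ρ < ρstar)
    (hcneg : sInf {c : ℝ | ∃ u : RN N → ℝ, InH1 u ∧ (∫ x, (u x) ^ 2) = ρ ^ 2 ∧
      gradL2 u ≤ Rstar ∧ c = Fen V p u} < 0) :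
    ∀ α : ℝ, 0 < α → α ≤ ρ →
      sInf {c : ℝ | ∃ u : RN N → ℝ, InH1 u ∧ (∫ x, (u x) ^ 2) = ρ ^ 2 ∧
          gradL2 u ≤ Rstar ∧ c = Fen V p u}
        ≤ sInf {c : ℝ | ∃ u : RN N → ℝ, InH1 u ∧ (∫ x, (u x) ^ 2) = α ^ 2 ∧
          gradL2 u ≤ Rstar ∧ c = Fen V p u} :=
  statement18_general N p hp1 V Rstar ρstar hgeom ρ hρρstar hcneg
end
end
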